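/- arXiv:1610.06374 — 2 statements merged into one kernel-verified Lean document; each statement's English description precedes it below -/
import Mathlib

section
/- For any irrational real number ξ, there are arbitrarily large integers X such that the system ‖xξ‖ ≤ 1/(2X) and 0 < x ≤ X has no integer solution x, where ‖·‖ denotes the distance to the nearest integer. -/
/-!
Let `q ≤ T` minimise `‖qξ‖` on `[1, T]` and let `q' > T` be the first integer with
`‖q'ξ‖ < ‖qξ‖`. The integer `q' * round (qξ) - q * round (q'ξ)` is nonzero, which gives
`(q + q') ‖qξ‖ > 1`. If `q' ≥ q + 2`, then `X = q' - 1` works, since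
`‖xξ‖ ≥ ‖qξ‖ > 1/(2X)` for `0 < x ≤ X`. If `q' = q + 1`, then
`‖ξ‖ ≤ ‖qξ‖ + ‖(q+1)ξ‖ < 2 ‖qξ‖ ≤ 2/(T+1)` by Dirichlet, which is impossible once `T` is large.
-/

theorem UnitAddCircle.norm_coe_le_abs_sub (t : ℝ) (n : ℤ) :
    ‖(t : UnitAddCircle)‖ ≤ |t - n| :=
  UnitAddCircle.norm_eq ▸ round_le t n

theorem Irrational.norm_coe_unitAddCircle_pos {t : ℝ} (ht : Irrational t) :
    0 < ‖(t : UnitAddCircle)‖ := by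
  rw [UnitAddCircle.norm_eq, abs_pos, sub_ne_zero]
  exact ht.ne_int _

theorem exists_norm_coe_nat_mul_le (ξ : ℝ) {T : ℕ} (hT : 0 < T) :
    ∃ k : ℕ, 0 < k ∧ k ≤ T ∧ ‖((k * ξ : ℝ) : UnitAddCircle)‖ ≤ 1 / (T + 1) := by
  simpa only [UnitAddCircle.norm_eq] using Real.exists_nat_abs_mul_sub_round_le ξ hT

theorem exists_norm_coe_nat_mul_lt (ξ : ℝ) {ε : ℝ} (hε : 0 < ε) :
    ∃ k : ℕ, 0 < k ∧ ‖((k * ξ : ℝ) : UnitAddCircle)‖ < ε := by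
  obtain ⟨n, hn⟩ := exists_nat_one_div_lt hε
  obtain ⟨k, hk0, -, hk⟩ := exists_norm_coe_nat_mul_le ξ n.succ_pos
  refine ⟨k, hk0, hk.trans_lt (lt_of_le_of_lt ?_ hn)⟩
  gcongr
  linarith

theorem one_lt_add_mul_norm_coe_of_lt (ξ : ℝ) {q q' : ℕ} (hq : 0 < q) (hqq' : q ≤ q')
    (hlt : ‖((q' * ξ : ℝ) : UnitAddCircle)‖ < ‖((q * ξ : ℝ) : UnitAddCircle)‖) :
    1 < (q + q') * ‖((q * ξ : ℝ) : UnitAddCircle)‖ := by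
  simp only [UnitAddCircle.norm_eq] at hlt ⊢
  set e := q * ξ - round (q * ξ)
  set e' := q' * ξ - round (q' * ξ)
  set D : ℤ := q' * round (q * ξ) - q * round (q' * ξ)
  have hqR : (0 : ℝ) < q := by exact_mod_cast hq
  have hqq'R : (q : ℝ) ≤ q' := by exact_mod_cast hqq'
  have hD : (D : ℝ) = q * e' - q' * e := by
    simp only [D, e, e']
    push_cast
    ring
  have hD0 : D ≠ 0 := by
    intro h
    rw [h, Int.cast_zero, eq_comm, sub_eq_zero] at hD
    have habs := congrArg abs hD
    rw [abs_mul, abs_mul, Nat.abs_cast, Nat.abs_cast] at habs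
    nlinarith [abs_nonneg e]
  calc (1 : ℝ) ≤ |(D : ℝ)| := by exact_mod_cast Int.one_le_abs hD0
    _ ≤ q * |e'| + q' * |e| := by
        rw [hD]
        refine (abs_sub _ _).trans_eq ?_
        rw [abs_mul, abs_mul, Nat.abs_cast, Nat.abs_cast]
    _ < (q + q') * |e| := by nlinarith

theorem exists_best_approx_and_next {ξ : ℝ} (hξ : Irrational ξ) {T : ℕ} (hT : 0 < T) :
    ∃ q q' : ℕ, 0 < q ∧ q ≤ T ∧ T < q' ∧
      ‖((q' * ξ : ℝ) : UnitAddCircle)‖ < ‖((q * ξ : ℝ) : UnitAddCircle)‖ ∧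
      ∀ x : ℕ, 0 < x → x < q' →
        ‖((q * ξ : ℝ) : UnitAddCircle)‖ ≤ ‖((x * ξ : ℝ) : UnitAddCircle)‖ := by
  classical
  obtain ⟨q, hq, hqmin⟩ := (Finset.Icc 1 T).exists_min_image
    (fun k : ℕ => ‖((k * ξ : ℝ) : UnitAddCircle)‖) ⟨1, Finset.mem_Icc.mpr ⟨le_rfl, hT⟩⟩
  obtain ⟨hq0, hqT⟩ := Finset.mem_Icc.mp hq
  have hdrop := exists_norm_coe_nat_mul_lt ξ
    (hξ.natCast_mul (m := q) (by omega)).norm_coe_unitAddCircle_pos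
  obtain ⟨hq'0, hq'lt⟩ := Nat.find_spec hdrop
  refine ⟨q, Nat.find hdrop, hq0, hqT, ?_, hq'lt, fun x hx0 hxq' => ?_⟩
  · by_contra! h
    exact hq'lt.not_ge (hqmin _ (Finset.mem_Icc.mpr ⟨hq'0, h⟩))
  · by_contra! h
    exact (Nat.find_min hdrop hxq') ⟨hx0, h⟩

theorem norm_coe_lt_two_mul_of_succ_lt (ξ : ℝ) {q : ℕ}
    (h : ‖((↑(q + 1) * ξ : ℝ) : UnitAddCircle)‖ < ‖((q * ξ : ℝ) : UnitAddCircle)‖) :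
    ‖(ξ : UnitAddCircle)‖ < 2 * ‖((q * ξ : ℝ) : UnitAddCircle)‖ := by
  have hξ : (ξ : UnitAddCircle) =
      ((↑(q + 1) * ξ : ℝ) : UnitAddCircle) - ((q * ξ : ℝ) : UnitAddCircle) := by
    rw [← AddCircle.coe_sub]
    push_cast
    ring_nf
  rw [hξ]
  linarith [norm_sub_le ((↑(q + 1) * ξ : ℝ) : UnitAddCircle) ((q * ξ : ℝ) : UnitAddCircle)]

theorem one_div_lt_norm_coe_of_add_two_le {ξ : ℝ} {q q' : ℕ} (hq : 0 < q) (hgap : q + 2 ≤ q')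
    (hdrop : ‖((q' * ξ : ℝ) : UnitAddCircle)‖ < ‖((q * ξ : ℝ) : UnitAddCircle)‖)
    (hmin : ∀ x : ℕ, 0 < x → x < q' →
      ‖((q * ξ : ℝ) : UnitAddCircle)‖ ≤ ‖((x * ξ : ℝ) : UnitAddCircle)‖)
    {x : ℕ} (hx0 : 0 < x) (hx : x ≤ q' - 1) :
    1 / (2 * ((q' - 1 : ℕ) : ℝ)) < ‖((x * ξ : ℝ) : UnitAddCircle)‖ := by
  have hdet := one_lt_add_mul_norm_coe_of_lt ξ hq (by omega) hdrop
  have hX : ((q' - 1 : ℕ) : ℝ) = q' - 1 := by rw [Nat.cast_sub (by omega), Nat.cast_one]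
  have hq2 : (q : ℝ) + 2 ≤ q' := by exact_mod_cast hgap
  refine lt_of_lt_of_le ?_ (hmin x hx0 (by omega))
  rw [hX, div_lt_iff₀ (by linarith)]
  nlinarith

/-- For any irrational real number ξ, there are arbitrarily large integers X such that
the system ‖xξ‖ ≤ 1/(2X), 0 < x ≤ X has no integer solution x. -/
theorem stmt_0 (ξ : ℝ) (hξ : Irrational ξ) :
    ∀ X₀ : ℕ, ∃ X : ℕ, X₀ ≤ X ∧
      ¬ ∃ x n : ℤ, 0 < x ∧ x ≤ (X : ℤ) ∧ |(x : ℝ) * ξ - (n : ℝ)| ≤ 1 / (2 * (X : ℝ)) := by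
  intro X₀
  have hξ0 := hξ.norm_coe_unitAddCircle_pos
  obtain ⟨T, hT⟩ := exists_nat_gt (max (X₀ : ℝ) (2 / ‖(ξ : UnitAddCircle)‖))
  obtain ⟨hX₀T, hξT⟩ := max_lt_iff.mp hT
  norm_cast at hX₀T
  have hT0 : 0 < T := Nat.cast_pos.mp ((div_pos two_pos hξ0).trans hξT)
  obtain ⟨q, q', hq0, hqT, hTq', hdrop, hmin⟩ := exists_best_approx_and_next hξ hT0
  obtain rfl | hgap : q' = q + 1 ∨ q + 2 ≤ q' := by omega
  · have hq_small : ‖((q * ξ : ℝ) : UnitAddCircle)‖ ≤ 1 / (T + 1) := by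
      obtain ⟨k, hk0, hkT, hk⟩ := exists_norm_coe_nat_mul_le ξ hT0
      exact (hmin k hk0 (by omega)).trans hk
    have h2 := norm_coe_lt_two_mul_of_succ_lt ξ hdrop
    rw [div_lt_iff₀ hξ0] at hξT
    rw [le_div_iff₀ (by positivity)] at hq_small
    nlinarith
  · refine ⟨q' - 1, by omega, ?_⟩
    rintro ⟨x, n, hx0, hxX, hxn⟩
    lift x to ℕ using hx0.le
    rw [Int.cast_natCast] at hxn
    exact (one_div_lt_norm_coe_of_add_two_le hq0 hgap hdrop hmin (by omega) (by omega)).not_ge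
      ((UnitAddCircle.norm_coe_le_abs_sub _ n).trans hxn)
end

section
/- Let θ ∈ ℝ² ∖ ℚ² with best approximation vectors (xₙ), and let μ' > μ > 0. If λ₁(xₙ) ≤ |xₙ|^{-μ'} for all n large enough, then for all sufficiently large X there exists an integer 0 < q ≤ X with dist(qθ, ℤ²) ≤ X^{-μ}; that is, θ ∈ Sing*(μ). -/
open Filter Metric

/-- The set of integer points of `ℝ²`. -/
def intPts : Set (EuclideanSpace ℝ (Fin 2)) := {v | ∀ i, ∃ m : ℤ, v i = (m : ℝ)}

/-- The lattice `Λ_x = ℤ² + ℤ·(p/q)` for `x = (p, q)`. -/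
def latt (p : Fin 2 → ℤ) (q : ℤ) : Set (EuclideanSpace ℝ (Fin 2)) :=
  {w | ∃ (m : Fin 2 → ℤ) (n : ℤ), w = fun i => (m i : ℝ) - (n : ℝ) * ((p i : ℝ) / (q : ℝ))}

/-- First minimum of a set of vectors: infimum of norms of nonzero elements. -/
noncomputable def firstMin (L : Set (EuclideanSpace ℝ (Fin 2))) : ℝ :=
  sInf {r : ℝ | ∃ v ∈ L, v ≠ 0 ∧ ‖v‖ = r}

/-!
For large `n`, let `v` be a nonzero vector of `Λ_{x_{n+1}}` of norm close to `λ₁(x_{n+1}) < 1`.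
Reducing modulo `q_{n+1}` and possibly negating, `v = w - a x̂_{n+1}` with `w ∈ ℤ²` and
`0 < a ≤ q_{n+1} / 2` (`a ≠ 0`, as nonzero integer vectors have norm `≥ 1`). Then
`dist(aθ, ℤ²) ≤ a ‖θ - x̂_{n+1}‖ + ‖v‖ ≤ dist(q_{n+1}θ, ℤ²) / 2 + ‖v‖ ≤ dist(q_nθ, ℤ²) / 2 + ‖v‖`,
while `a < q_{n+1}` gives `dist(q_nθ, ℤ²) ≤ dist(aθ, ℤ²)`. Hence
`dist(q_nθ, ℤ²) ≤ 2 λ₁(x_{n+1}) ≤ 2 q_{n+1}^{-μ'}`, and for `q_n ≤ X < q_{n+1}` this is at most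
`2 X^{-μ'} ≤ X^{-μ}` once `X` is large.
-/

lemma one_le_norm_of_mem_intPts {v : EuclideanSpace ℝ (Fin 2)} (hv : v ∈ intPts) (hv0 : v ≠ 0) :
    1 ≤ ‖v‖ := by
  obtain ⟨i, hi⟩ : ∃ i, v i ≠ 0 := by
    by_contra! h
    exact hv0 (WithLp.ofLp_injective 2 (funext h))
  obtain ⟨m, hm⟩ := hv i
  have hm0 : m ≠ 0 := by rintro rfl; simp [hm] at hi
  calc (1 : ℝ) ≤ |(m : ℝ)| := by exact_mod_cast Int.one_le_abs hm0
    _ = ‖v i‖ := by rw [hm, Real.norm_eq_abs]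
    _ ≤ ‖v‖ := PiLp.norm_apply_le v i

lemma exists_norm_lt_of_firstMin_lt {L : Set (EuclideanSpace ℝ (Fin 2))}
    (hL : ∃ v ∈ L, v ≠ 0) {r : ℝ} (hr : firstMin L < r) : ∃ v ∈ L, v ≠ 0 ∧ ‖v‖ < r := by
  obtain ⟨v, hvL, hv0⟩ := hL
  have hbdd : BddBelow {r : ℝ | ∃ v ∈ L, v ≠ 0 ∧ ‖v‖ = r} :=
    ⟨0, by rintro _ ⟨v, -, -, rfl⟩; positivity⟩
  obtain ⟨_, ⟨w, hwL, hw0, rfl⟩, hwr⟩ := (csInf_lt_iff hbdd ⟨‖v‖, v, hvL, hv0, rfl⟩).mp hr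
  exact ⟨w, hwL, hw0, hwr⟩

lemma exists_ne_zero_mem_latt (P : Fin 2 → ℤ) (Q : ℤ) : ∃ v ∈ latt P Q, v ≠ 0 := by
  refine ⟨EuclideanSpace.single 0 1, ⟨Pi.single 0 1, 0, ?_⟩, by simp⟩
  funext i
  fin_cases i <;> simp

lemma exists_half_repr_of_mem_latt {P : Fin 2 → ℤ} {Q : ℤ} (hQ : 0 < Q)
    {v : EuclideanSpace ℝ (Fin 2)} (hv : v ∈ latt P Q) (hv0 : v ≠ 0) (hv1 : ‖v‖ < 1) :
    ∃ (w : Fin 2 → ℤ) (a : ℤ), 0 < a ∧ 2 * a ≤ Q ∧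
      ‖v‖ = ‖WithLp.toLp 2 (fun i => (w i : ℝ) - a * ((P i : ℝ) / Q))‖ := by
  obtain ⟨m, b, hmb⟩ := hv
  have hQR : (Q : ℝ) ≠ 0 := by exact_mod_cast hQ.ne'
  set m₀ : Fin 2 → ℤ := fun i => m i - b / Q * P i
  have hv_eq : v = WithLp.toLp 2 (fun i => (m₀ i : ℝ) - (b % Q : ℤ) * ((P i : ℝ) / Q)) := by
    refine WithLp.ofLp_injective 2 (hmb.trans (funext fun i => ?_))
    have hb : (b : ℝ) = Q * (b / Q : ℤ) + (b % Q : ℤ) := by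
      exact_mod_cast (Int.mul_ediv_add_emod b Q).symm
    simp only [m₀, Int.cast_sub, Int.cast_mul, hb]
    field_simp
    ring
  have hb₀ : b % Q ≠ 0 := by
    intro h
    refine absurd (one_le_norm_of_mem_intPts (fun i => ⟨m₀ i, ?_⟩) hv0) (not_le.mpr hv1)
    simp [hv_eq, h]
  have hb₀_nonneg := Int.emod_nonneg b hQ.ne'
  have hb₀_lt := Int.emod_lt_of_pos b hQ
  by_cases hhalf : 2 * (b % Q) ≤ Q
  · exact ⟨m₀, b % Q, by omega, hhalf, by rw [hv_eq]⟩
  · refine ⟨P - m₀, Q - b % Q, by omega, by omega, ?_⟩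
    rw [← norm_neg v, hv_eq]
    congr 1
    ext i
    simp only [PiLp.neg_apply, Pi.sub_apply, Int.cast_sub]
    field_simp
    ring

lemma le_two_mul_norm_of_mem_latt {θ : EuclideanSpace ℝ (Fin 2)} {P : Fin 2 → ℤ} {Q : ℤ}
    (hQ : 0 < Q) {D : ℝ} (hd : dist ((Q : ℝ) • θ) (WithLp.toLp 2 (fun i => (P i : ℝ))) ≤ D)
    (hD : ∀ a : ℤ, 0 < a → a < Q → D ≤ infDist ((a : ℝ) • θ) intPts)
    {v : EuclideanSpace ℝ (Fin 2)} (hv : v ∈ latt P Q) (hv0 : v ≠ 0) (hv1 : ‖v‖ < 1) :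
    D ≤ 2 * ‖v‖ := by
  obtain ⟨w, a, ha, haQ, hvw⟩ := exists_half_repr_of_mem_latt hQ hv hv0 hv1
  have hQR : (0 : ℝ) < Q := by exact_mod_cast hQ
  have haR : (0 : ℝ) < a := by exact_mod_cast ha
  have hsplit : (a : ℝ) • θ - WithLp.toLp 2 (fun i => (w i : ℝ)) =
      ((a : ℝ) / Q) • ((Q : ℝ) • θ - WithLp.toLp 2 (fun i => (P i : ℝ))) -
        WithLp.toLp 2 (fun i => (w i : ℝ) - a * ((P i : ℝ) / Q)) := by
    ext i
    simp only [PiLp.sub_apply, PiLp.smul_apply, smul_eq_mul]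
    field_simp
    ring
  have hfrac : (a : ℝ) / Q ≤ 1 / 2 := by
    have : (2 : ℝ) * a ≤ Q := by exact_mod_cast haQ
    rw [div_le_iff₀ hQR]
    linarith
  have hdist := dist_nonneg.trans hd
  suffices D ≤ D / 2 + ‖v‖ by linarith
  calc D ≤ infDist ((a : ℝ) • θ) intPts := hD a ha (by omega)
    _ ≤ dist ((a : ℝ) • θ) (WithLp.toLp 2 (fun i => (w i : ℝ))) :=
        infDist_le_dist_of_mem fun i => ⟨w i, rfl⟩
    _ ≤ (a : ℝ) / Q * dist ((Q : ℝ) • θ) (WithLp.toLp 2 (fun i => (P i : ℝ))) + ‖v‖ := by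
        rw [dist_eq_norm, hsplit, hvw, dist_eq_norm]
        refine (norm_sub_le _ _).trans_eq ?_
        rw [norm_smul, Real.norm_of_nonneg (by positivity)]
    _ ≤ 1 / 2 * D + ‖v‖ := by gcongr
    _ = D / 2 + ‖v‖ := by ring

lemma le_two_mul_firstMin {θ : EuclideanSpace ℝ (Fin 2)} {P : Fin 2 → ℤ} {Q : ℤ}
    (hQ : 0 < Q) {D : ℝ} (hd : dist ((Q : ℝ) • θ) (WithLp.toLp 2 (fun i => (P i : ℝ))) ≤ D)
    (hD : ∀ a : ℤ, 0 < a → a < Q → D ≤ infDist ((a : ℝ) • θ) intPts)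
    (hsmall : firstMin (latt P Q) < 1) : D ≤ 2 * firstMin (latt P Q) := by
  rw [← div_le_iff₀' two_pos]
  refine le_of_forall_gt_imp_ge_of_dense fun r hr => ?_
  obtain ⟨v, hv, hv0, hvr⟩ :=
    exists_norm_lt_of_firstMin_lt (exists_ne_zero_mem_latt P Q) (lt_min hr hsmall)
  have := le_two_mul_norm_of_mem_latt hQ hd hD hv hv0 (hvr.trans_le (min_le_right _ _))
  linarith [min_le_left r 1]

lemma natCast_add_one_le_apply {q : ℕ → ℤ} (hq0 : q 0 = 1)
    (hmono : ∀ n, q n < q (n + 1)) (n : ℕ) : (n : ℤ) + 1 ≤ q n := by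
  induction n with
  | zero => simp [hq0]
  | succ k ih => push_cast; linarith [hmono k]

lemma apply_le_apply_of_pos_of_lt_succ {f : ℤ → ℝ} {q : ℕ → ℤ} (hq0 : q 0 = 1)
    (hdec : ∀ n, f (q (n + 1)) ≤ f (q n))
    (hmin : ∀ n, ∀ m : ℤ, q n < m → m < q (n + 1) → f (q n) ≤ f m) :
    ∀ n, ∀ m : ℤ, 0 < m → m < q (n + 1) → f (q n) ≤ f m := by
  intro n
  induction n with
  | zero =>
    intro m hm hmq
    rcases (show q 0 ≤ m by omega).eq_or_lt with h | h
    · rw [h]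
    · exact hmin 0 m h hmq
  | succ k ih =>
    intro m hm hmq
    rcases lt_trichotomy m (q (k + 1)) with h | h | h
    · exact (hdec k).trans (ih m hm h)
    · rw [h]
    · exact hmin (k + 1) m h hmq

lemma exists_le_lt_succ_of_tendsto_atTop {u : ℕ → ℝ} (hu : Tendsto u atTop atTop) {N : ℕ} {X : ℝ}
    (hX : u N ≤ X) : ∃ n, N ≤ n ∧ u n ≤ X ∧ X < u (n + 1) := by
  have hex : ∃ k, N ≤ k ∧ X < u k :=
    ((eventually_ge_atTop N).and (hu.eventually_gt_atTop X)).exists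
  have hN : N < Nat.find hex := (Nat.find_spec hex).1.lt_of_ne fun h => by
    have := (Nat.find_spec hex).2; rw [← h] at this; linarith
  refine ⟨Nat.find hex - 1, by omega, ?_, ?_⟩
  · by_contra hlt
    exact Nat.find_min hex (show Nat.find hex - 1 < Nat.find hex by omega) ⟨by omega, not_le.mp hlt⟩
  · rw [Nat.sub_add_cancel (by omega)]
    exact (Nat.find_spec hex).2

lemma eventually_two_mul_rpow_neg_le {μ μ' : ℝ} (hμ' : μ < μ') :
    ∀ᶠ X : ℝ in atTop, 2 * X ^ (-μ') ≤ X ^ (-μ) := by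
  filter_upwards [(tendsto_rpow_neg_atTop (sub_pos.mpr hμ')).eventually_le_const
    (by norm_num : (0 : ℝ) < 1 / 2), eventually_gt_atTop 0] with X hX hX0
  have hsplit : X ^ (-μ') = X ^ (-(μ' - μ)) * X ^ (-μ) := by
    rw [← Real.rpow_add hX0]; ring_nf
  rw [hsplit]
  nlinarith [Real.rpow_pos_of_pos hX0 (-μ)]

theorem stmt_10_general (θ : EuclideanSpace ℝ (Fin 2))
    (μ μ' : ℝ) (hμ : 0 < μ) (hμ' : μ < μ')
    (q : ℕ → ℤ) (p : ℕ → Fin 2 → ℤ)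
    -- (xₙ) is the sequence of best approximation vectors of θ:
    (hq0 : q 0 = 1)
    (hmono : ∀ n, q n < q (n + 1))
    (hp : ∀ n, dist ((q n : ℝ) • θ) (WithLp.toLp 2 (fun i => (p n i : ℝ))) =
      infDist ((q n : ℝ) • θ) intPts)
    (hdec : ∀ n, infDist ((q (n + 1) : ℝ) • θ) intPts < infDist ((q n : ℝ) • θ) intPts)
    (hmin : ∀ n, ∀ m : ℤ, q n < m → m < q (n + 1) →
      infDist ((q n : ℝ) • θ) intPts ≤ infDist ((m : ℝ) • θ) intPts)
    (hlam : ∀ᶠ n : ℕ in atTop, firstMin (latt (p n) (q n)) ≤ (q n : ℝ) ^ (-μ')) :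
    ∀ᶠ X : ℝ in atTop, ∃ m : ℤ, 0 < m ∧ (m : ℝ) ≤ X ∧
      infDist ((m : ℝ) • θ) intPts ≤ X ^ (-μ) := by
  have hq_ge := natCast_add_one_le_apply hq0 hmono
  have hq_top : Tendsto (fun n => (q n : ℝ)) atTop atTop :=
    tendsto_atTop_mono (fun n => by exact_mod_cast (hq_ge n).trans' (by omega))
      tendsto_natCast_atTop_atTop
  have hbest := apply_le_apply_of_pos_of_lt_succ (f := fun m : ℤ => infDist ((m : ℝ) • θ) intPts)
    hq0 (fun n => (hdec n).le) hmin
  have hkey : ∀ᶠ n : ℕ in atTop,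
      infDist ((q n : ℝ) • θ) intPts ≤ 2 * (q (n + 1) : ℝ) ^ (-μ') := by
    filter_upwards [(tendsto_add_atTop_nat 1).eventually hlam] with n hn
    have hq1 : 1 < q (n + 1) := (hq_ge (n + 1)).trans_lt' (by omega)
    have hsmall := hn.trans_lt
      (Real.rpow_lt_one_of_one_lt_of_neg (by exact_mod_cast hq1) (by linarith))
    exact (le_two_mul_firstMin (one_pos.trans hq1) ((hp (n + 1)).trans_le (hdec n).le) (hbest n)
      hsmall).trans (by linarith)
  obtain ⟨N, hN⟩ := eventually_atTop.mp hkey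
  filter_upwards [eventually_ge_atTop (q N : ℝ), eventually_two_mul_rpow_neg_le hμ',
    eventually_gt_atTop 0] with X hXN hX hX0
  obtain ⟨n, hnN, hqn, hqn1⟩ := exists_le_lt_succ_of_tendsto_atTop hq_top hXN
  refine ⟨q n, (hq_ge n).trans_lt' (by omega), hqn, ?_⟩
  calc infDist ((q n : ℝ) • θ) intPts ≤ 2 * (q (n + 1) : ℝ) ^ (-μ') := hN n hnN
    _ ≤ 2 * X ^ (-μ') := by
        linarith [Real.rpow_le_rpow_of_nonpos hX0 hqn1.le (by linarith : -μ' ≤ 0)]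
    _ ≤ X ^ (-μ) := hX

/-- If the best approximation vectors `xₙ` of `θ ∈ ℝ² ∖ ℚ²` satisfy
`λ₁(xₙ) ≤ |xₙ|^{-μ'}` for all large `n`, with `μ' > μ > 0`, then `θ ∈ Sing*(μ)`:
for all large real `X` there is an integer `0 < q ≤ X` with `dist(qθ, ℤ²) ≤ X^{-μ}`. -/
theorem stmt_10 (θ : EuclideanSpace ℝ (Fin 2))
    (hθ : ¬ ∃ a : Fin 2 → ℚ, ∀ i, θ i = (a i : ℝ))
    (μ μ' : ℝ) (hμ : 0 < μ) (hμ' : μ < μ')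
    (q : ℕ → ℤ) (p : ℕ → Fin 2 → ℤ)
    -- (xₙ) is the sequence of best approximation vectors of θ:
    (hq0 : q 0 = 1)
    (hmono : ∀ n, q n < q (n + 1))
    (hp : ∀ n, dist ((q n : ℝ) • θ) (WithLp.toLp 2 (fun i => (p n i : ℝ))) =
      infDist ((q n : ℝ) • θ) intPts)
    (hdec : ∀ n, infDist ((q (n + 1) : ℝ) • θ) intPts < infDist ((q n : ℝ) • θ) intPts)
    (hmin : ∀ n, ∀ m : ℤ, q n < m → m < q (n + 1) →
      infDist ((q n : ℝ) • θ) intPts ≤ infDist ((m : ℝ) • θ) intPts)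
    (hlam : ∀ᶠ n : ℕ in atTop, firstMin (latt (p n) (q n)) ≤ (q n : ℝ) ^ (-μ')) :
    ∀ᶠ X : ℝ in atTop, ∃ m : ℤ, 0 < m ∧ (m : ℝ) ≤ X ∧
      infDist ((m : ℝ) • θ) intPts ≤ X ^ (-μ) :=
  stmt_10_general θ μ μ' hμ hμ' q p hq0 hmono hp hdec hmin hlam
end
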